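/- Suppose two measurable sets G' and G'' are disjoint, have positive Q-probability and positive P-probability, and each satisfies the group property that the conditional densities of P and Q restricted to the set agree. If additionally Q(G')/P(G') = Q(G'')/P(G''), then the union G' ∪ G'' also satisfies the group property: the conditional densities of P and Q restricted to G' ∪ G'' agree. -/
import Mathlib


open MeasureTheory

/-- Merging two disjoint groups with equal density ratio `Q(G)/P(G)` preserves the
group property: if `G'` and `G''` are disjoint measurable sets of positive `P`- and
`Q`-measure on each of which the conditional densities of `P` and `Q` agree, and
`Q(G')/P(G') = Q(G'')/P(G'')`, then the conditional densities of `P` and `Q` also agree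
on the union `G' ∪ G''`. -/
theorem group_property_union {α : Type*} [MeasurableSpace α]
    (μ P Q : Measure α) [IsProbabilityMeasure P] [IsProbabilityMeasure Q]
    (p q : α → ℝ)
    (G' G'' : Set α) (hG' : MeasurableSet G') (hG'' : MeasurableSet G'')
    (hdisj : Disjoint G' G'')
    (hQ' : 0 < (Q G').toReal) (hP' : 0 < (P G').toReal)
    (hQ'' : 0 < (Q G'').toReal) (hP'' : 0 < (P G'').toReal)
    (hcond' : ∀ᵐ x ∂μ, x ∈ G' → q x / (Q G').toReal = p x / (P G').toReal)
    (hcond'' : ∀ᵐ x ∂μ, x ∈ G'' → q x / (Q G'').toReal = p x / (P G'').toReal)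
    (hratio : (Q G').toReal / (P G').toReal = (Q G'').toReal / (P G'').toReal) :
    ∀ᵐ x ∂μ, x ∈ G' ∪ G'' →
      q x / (Q (G' ∪ G'')).toReal = p x / (P (G' ∪ G'')).toReal := by
  have hQu : (Q (G' ∪ G'')).toReal = (Q G').toReal + (Q G'').toReal := by
    rw [measure_union hdisj hG'', ENNReal.toReal_add (measure_ne_top _ _) (measure_ne_top _ _)]
  have hPu : (P (G' ∪ G'')).toReal = (P G').toReal + (P G'').toReal := by
    rw [measure_union hdisj hG'', ENNReal.toReal_add (measure_ne_top _ _) (measure_ne_top _ _)]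
  have hrat : (Q G').toReal * (P G'').toReal = (Q G'').toReal * (P G').toReal := by
    field_simp at hratio; linarith
  filter_upwards [hcond', hcond''] with x h1 h2 hx
  rw [hQu, hPu]
  rcases hx with hx | hx
  · have h := h1 hx
    rw [div_eq_div_iff hQ'.ne' hP'.ne'] at h
    rw [div_eq_div_iff (by positivity) (by positivity)]
    have h3 : (q x * (P G'').toReal) * (P G').toReal
        = (p x * (Q G'').toReal) * (P G').toReal := by
      calc (q x * (P G'').toReal) * (P G').toReal
          = q x * (P G').toReal * (P G'').toReal := by ring
        _ = p x * (Q G').toReal * (P G'').toReal := by rw [h]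
        _ = p x * ((Q G').toReal * (P G'').toReal) := by ring
        _ = p x * ((Q G'').toReal * (P G').toReal) := by rw [hrat]
        _ = (p x * (Q G'').toReal) * (P G').toReal := by ring
    have key := mul_right_cancel₀ hP'.ne' h3
    linarith
  · have h := h2 hx
    rw [div_eq_div_iff hQ''.ne' hP''.ne'] at h
    rw [div_eq_div_iff (by positivity) (by positivity)]
    have h3 : (q x * (P G').toReal) * (P G'').toReal
        = (p x * (Q G').toReal) * (P G'').toReal := by
      calc (q x * (P G').toReal) * (P G'').toReal
          = q x * (P G'').toReal * (P G').toReal := by ring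
        _ = p x * (Q G'').toReal * (P G').toReal := by rw [h]
        _ = p x * ((Q G'').toReal * (P G').toReal) := by ring
        _ = p x * ((Q G').toReal * (P G'').toReal) := by rw [← hrat]
        _ = (p x * (Q G').toReal) * (P G'').toReal := by ring
    have key := mul_right_cancel₀ hP''.ne' h3
    linarith
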